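/- arXiv:2604.12432 — 6 statements merged into one kernel-verified Lean document; each statement's English description precedes it below -/
import Mathlib

section
/- For every set A there exists a subset-friendly set U with A ∈ U. -/
open ZFSet

/-- Every set is contained in a transitive set. -/
theorem exists_isTransitive_superset (x : ZFSet) :
    ∃ T : ZFSet, T.IsTransitive ∧ x ⊆ T := by
  induction x using ZFSet.inductionOn with
  | _ x IH =>
    classical
    set F : ZFSet → ZFSet := fun y =>
      if h : ∃ T : ZFSet, T.IsTransitive ∧ y ⊆ T then h.choose else ∅ with hF
    have hFspec : ∀ y ∈ x, (F y).IsTransitive ∧ y ⊆ F y := by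
      intro y hy
      have h := IH y hy
      simp only [hF, dif_pos h]
      exact h.choose_spec
    haveI : ZFSet.Definable₁ F := Classical.allZFSetDefinable _
    refine ⟨x ∪ ⋃₀ (ZFSet.image F x), ?_, fun z hz => mem_union.2 (Or.inl hz)⟩
    intro z hz w hw
    rcases mem_union.1 hz with hz | hz
    · refine mem_union.2 (Or.inr ?_)
      refine mem_sUnion.2 ⟨F z, ?_, (hFspec z hz).2 hw⟩
      exact mem_image.2 ⟨z, hz, rfl⟩
    · rcases mem_sUnion.1 hz with ⟨t, ht, hzt⟩
      rcases mem_image.1 ht with ⟨y, hy, rfl⟩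
      refine mem_union.2 (Or.inr (mem_sUnion.2 ⟨F y, ht, ?_⟩))
      exact (hFspec y hy).1 _ hzt hw

/-- A set `U` is *subset-friendly* iff `∅ ∈ U`, `U` is transitive, `U` is closed under
power sets, and any two members of `U` lie in a common transitive member of `U`. -/
def ZFSet.SubsetFriendly (U : ZFSet) : Prop :=
  ∅ ∈ U ∧ U.IsTransitive ∧ (∀ Y ∈ U, ZFSet.powerset Y ∈ U) ∧
    ∀ Y ∈ U, ∀ Z ∈ U, ∃ V ∈ U, V.IsTransitive ∧ Y ∈ V ∧ Z ∈ V

/-- For every set `A` there exists a subset-friendly set `U` with `A ∈ U`. -/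
theorem exists_subsetFriendly_mem (A : ZFSet) :
    ∃ U : ZFSet, U.SubsetFriendly ∧ A ∈ U := by
  obtain ⟨T, hT, hsub⟩ := exists_isTransitive_superset ({A, ∅} : ZFSet)
  -- the cumulative hierarchy of iterated power sets over `T`
  set f : ℕ → ZFSet := fun n => ZFSet.powerset^[n] T with hf
  have hf0 : f 0 = T := rfl
  have hfs : ∀ n, f (n + 1) = ZFSet.powerset (f n) := fun n => by
    simp [hf, Function.iterate_succ_apply']
  have htrans : ∀ n, (f n).IsTransitive := by
    intro n
    induction n with
    | zero => exact hT
    | succ n ih => rw [hfs]; exact ih.powerset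
  have hstep : ∀ n, f n ⊆ f (n + 1) := fun n => by
    rw [hfs]; exact (htrans n).subset_powerset
  have hmono : ∀ {m n : ℕ}, m ≤ n → f m ⊆ f n := by
    intro m n hmn
    induction n, hmn using Nat.le_induction with
    | base => exact fun z hz => hz
    | succ n _ ih => exact fun z hz => hstep n (ih hz)
  refine ⟨⋃₀ ZFSet.range f, ⟨?_, ?_, ?_, ?_⟩, ?_⟩
  · exact mem_sUnion.2 ⟨f 0, mem_range.2 ⟨0, rfl⟩, hsub (by simp)⟩
  · intro y hy z hz
    rcases mem_sUnion.1 hy with ⟨t, ht, hyt⟩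
    rcases mem_range.1 ht with ⟨n, rfl⟩
    exact mem_sUnion.2 ⟨f n, mem_range.2 ⟨n, rfl⟩, htrans n _ hyt hz⟩
  · intro Y hY
    rcases mem_sUnion.1 hY with ⟨t, ht, hYt⟩
    rcases mem_range.1 ht with ⟨n, rfl⟩
    refine mem_sUnion.2 ⟨f (n + 2), mem_range.2 ⟨n + 2, rfl⟩, ?_⟩
    rw [hfs]
    refine mem_powerset.2 ?_
    rw [hfs]
    intro z hz
    exact mem_powerset.2 fun w hw => (htrans n _ hYt) (mem_powerset.1 hz hw)
  · intro Y hY Z hZ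
    rcases mem_sUnion.1 hY with ⟨t, ht, hYt⟩
    rcases mem_range.1 ht with ⟨n, rfl⟩
    rcases mem_sUnion.1 hZ with ⟨s, hs, hZs⟩
    rcases mem_range.1 hs with ⟨m, rfl⟩
    refine ⟨f (max n m), ?_, htrans _, hmono (le_max_left n m) hYt,
      hmono (le_max_right n m) hZs⟩
    refine mem_sUnion.2 ⟨f (max n m + 1), mem_range.2 ⟨_, rfl⟩, ?_⟩
    rw [hfs]
    exact mem_powerset.2 fun z hz => hz
  · exact mem_sUnion.2 ⟨f 0, mem_range.2 ⟨0, rfl⟩, hsub (by simp)⟩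
end

section
/- If U is a subset-friendly set and A ∈ U, then the union ⋃A (the set of all members of members of A) belongs to U. -/
namespace ZFSet

theorem IsTransitive.sUnion_subset_of_mem {V A : ZFSet} (hV : V.IsTransitive) (hA : A ∈ V) :
    sUnion A ⊆ V := fun _ hx => by
  obtain ⟨y, hyA, hxy⟩ := mem_sUnion.1 hx
  exact hV.subset_of_mem (hV.subset_of_mem hA hyA) hxy

theorem SubsetFriendly.mem_of_subset_of_mem {U V Y : ZFSet} (hU : U.SubsetFriendly)
    (hV : V ∈ U) (hYV : Y ⊆ V) : Y ∈ U :=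
  hU.2.1.subset_of_mem (hU.2.2.1 V hV) (mem_powerset.2 hYV)

theorem SubsetFriendly.exists_isTransitive_mem {U A : ZFSet} (hU : U.SubsetFriendly)
    (hA : A ∈ U) : ∃ V ∈ U, V.IsTransitive ∧ A ∈ V := by
  obtain ⟨V, hVU, hV, hAV, -⟩ := hU.2.2.2 A hA A hA
  exact ⟨V, hVU, hV, hAV⟩

end ZFSet

/-- If `U` is subset-friendly and `A ∈ U`, then `⋃₀ A ∈ U`. -/
theorem sUnion_mem_subsetFriendly (U A : ZFSet)
    (hU : U.SubsetFriendly) (hA : A ∈ U) : (ZFSet.sUnion A : ZFSet) ∈ U := by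
  obtain ⟨V, hVU, hV, hAV⟩ := hU.exists_isTransitive_mem hA
  exact hU.mem_of_subset_of_mem hVU (hV.sUnion_subset_of_mem hAV)
end

section
/- If U is a subset-friendly set, A ∈ U, and T is the transitive closure of A (that is, T is transitive, A ⊆ T, and T ⊆ W for every transitive set W with A ⊆ W), then T ∈ U. -/
/-- If `U` is subset-friendly, `A ∈ U`, and `T` is the transitive closure of `A`
(i.e. `T` is transitive, `A ⊆ T`, and `T` is contained in every transitive set
containing `A` as a subset), then `T ∈ U`. -/
theorem transClosure_mem_subsetFriendly (U A T : ZFSet)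
    (hU : U.SubsetFriendly) (hA : A ∈ U)
    (hTtrans : T.IsTransitive) (hAT : A ⊆ T)
    (hTmin : ∀ W : ZFSet, W.IsTransitive → A ⊆ W → T ⊆ W) : T ∈ U := by
  obtain ⟨-, hUtrans, hpow, hpair⟩ := hU
  obtain ⟨V, hV, hVtrans, hAV, -⟩ := hpair A hA A hA
  have hTV : T ⊆ V := hTmin V hVtrans (hVtrans.subset_of_mem hAV)
  have hTP : T ∈ ZFSet.powerset V := (ZFSet.mem_powerset).2 hTV
  exact hUtrans.subset_of_mem (hpow V hV) hTP
end

section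
/- If U is a subset-friendly set, A ∈ U and B ∈ U, then insert A B (the set obtained from B by adjoining A as an element) belongs to U; consequently every finite set {A₁, …, Aₙ} whose elements all lie in U belongs to U. -/
namespace ZFSet

theorem IsTransitive.insert_subset {V A B : ZFSet} (hV : V.IsTransitive) (hA : A ∈ V)
    (hB : B ∈ V) : insert A B ⊆ V := by
  intro x hx
  rcases mem_insert_iff.mp hx with rfl | hxB
  · exact hA
  · exact hV.subset_of_mem hB hxB

theorem IsTransitive.mem_of_subset_of_powerset_mem {U V S : ZFSet} (hU : U.IsTransitive)
    (hpow : powerset V ∈ U) (hS : S ⊆ V) : S ∈ U :=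
  hU.subset_of_mem hpow (mem_powerset.mpr hS)

namespace SubsetFriendly

variable {U : ZFSet}

theorem insert_mem (hU : SubsetFriendly U) {A B : ZFSet} (hA : A ∈ U) (hB : B ∈ U) :
    insert A B ∈ U := by
  obtain ⟨-, hUt, hpow, hpair⟩ := hU
  obtain ⟨V, hVU, hVt, hAV, hBV⟩ := hpair A hA B hB
  exact hUt.mem_of_subset_of_powerset_mem (hpow V hVU) (hVt.insert_subset hAV hBV)

theorem foldr_insert_mem (hU : SubsetFriendly U) :
    ∀ {l : List ZFSet}, (∀ A ∈ l, A ∈ U) → l.foldr insert ∅ ∈ U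
  | [], _ => hU.1
  | a :: _, hl =>
    hU.insert_mem (hl a List.mem_cons_self)
      (foldr_insert_mem hU fun A hA => hl A (List.mem_cons_of_mem a hA))

end SubsetFriendly

end ZFSet

/-- If `U` is subset-friendly and `A, B ∈ U`, then `insert A B ∈ U`; consequently
every finite set `{A₁, …, Aₙ}` with all elements in `U` belongs to `U`. -/
theorem insert_mem_subsetFriendly (U : ZFSet) (hU : U.SubsetFriendly) :
    (∀ A B : ZFSet, A ∈ U → B ∈ U → insert A B ∈ U) ∧
      ∀ l : List ZFSet, (∀ A ∈ l, A ∈ U) → l.foldr insert ∅ ∈ U :=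
  ⟨fun _ _ hA hB => hU.insert_mem hA hB, fun _ hl => hU.foldr_insert_mem hl⟩
end

section
/- If U is a subset-friendly set and A, B ∈ U, then A ∪ B ∈ U. -/
/-- If `U` is subset-friendly and `A, B ∈ U`, then `A ∪ B ∈ U`. -/
theorem union_mem_subsetFriendly (U A B : ZFSet)
    (hU : U.SubsetFriendly) (hA : A ∈ U) (hB : B ∈ U) : A ∪ B ∈ U := by
  obtain ⟨-, hTrans, hPow, hPair⟩ := hU
  obtain ⟨V, hV, hVtrans, hAV, hBV⟩ := hPair A hA B hB
  have hsub : A ∪ B ⊆ V := by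
    intro x hx
    rcases ZFSet.mem_union.mp hx with h | h
    · exact hVtrans A hAV h
    · exact hVtrans B hBV h
  have : A ∪ B ∈ ZFSet.powerset V := ZFSet.mem_powerset.mpr hsub
  exact hTrans _ (hPow V hV) this
end

section
/- If U is a subset-friendly set and A, B ∈ U, then the Cartesian product A × B (the set of all Kuratowski ordered pairs (a, b) with a ∈ A and b ∈ B) belongs to U. -/
/-- If `U` is subset-friendly and `A, B ∈ U`, then the Cartesian product `A × B`
(the set of Kuratowski pairs `(a, b)` with `a ∈ A`, `b ∈ B`) belongs to `U`. -/
theorem prod_mem_subsetFriendly (U A B : ZFSet)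
    (hU : U.SubsetFriendly) (hA : A ∈ U) (hB : B ∈ U) : A.prod B ∈ U := by
  obtain ⟨-, htransU, hpow, hcommon⟩ := hU
  obtain ⟨V, hVU, hVtr, hAV, hBV⟩ := hcommon A hA B hB
  have hAsub : A ⊆ V := hVtr.subset_of_mem hAV
  have hBsub : B ⊆ V := hVtr.subset_of_mem hBV
  have hprod : A.prod B ∈ ZFSet.powerset (ZFSet.powerset (ZFSet.powerset V)) := by
    rw [ZFSet.mem_powerset]
    intro z hz
    rw [ZFSet.mem_prod] at hz
    obtain ⟨a, ha, b, hb, rfl⟩ := hz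
    rw [ZFSet.mem_powerset]
    intro w hw
    rw [ZFSet.mem_powerset]
    have : w = {a} ∨ w = {a, b} := by
      simpa [ZFSet.pair] using hw
    intro t ht
    rcases this with rfl | rfl
    · rw [ZFSet.mem_singleton] at ht
      exact ht ▸ hAsub ha
    · rcases ZFSet.mem_pair.1 ht with rfl | rfl
      · exact hAsub ha
      · exact hBsub hb
  have h3 : ZFSet.powerset (ZFSet.powerset (ZFSet.powerset V)) ∈ U :=
    hpow _ (hpow _ (hpow _ hVU))
  exact htransU _ h3 hprod
end
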